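/- arXiv:1611.08621 — 3 statements merged into one kernel-verified Lean document; each statement's English description precedes it below -/
import Mathlib

section
/- For any F ∈ ℝ^{3×3} with det F = 1 and r ≥ 1, the infimum over unit vectors n ∈ S² of Tr(Fᵀ ℓ_n^{-1} F), where ℓ_n^{-1} = r^{1/3}(I − ((r−1)/r) n⊗n), equals r^{1/3}( |F|² − ((r−1)/r) λ_M(F)² ), where λ_M(F) is the largest singular value of F and |F|² = Tr(FᵀF). Moreover, the infimum is attained. -/
/-!
Expanding the trace gives `Tr(Fᵀ ℓ_n⁻¹ F) = r^{1/3} (|F|² - ((r-1)/r) |Fᵀ n|²)`. Since `r ≥ 1`,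
minimising over `n` means maximising `|Fᵀ n|` over the unit sphere. By compactness the maximum is
attained, and it is the `L²` operator norm of `Fᵀ`, which equals that of `F` because an operator
and its adjoint have the same norm.
-/

open Matrix

/-- Euclidean norm on `Fin 3 → ℝ`. -/
noncomputable def enorm3 (v : Fin 3 → ℝ) : ℝ := Real.sqrt (∑ i, (v i) ^ 2)

/-- Maximum singular value (operator norm) of a 3×3 real matrix. -/
noncomputable def lamM (F : Matrix (Fin 3) (Fin 3) ℝ) : ℝ :=
  sSup {x | ∃ v : Fin 3 → ℝ, enorm3 v = 1 ∧ x = enorm3 (F.mulVec v)}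

namespace Matrix

variable {m n R : Type*} [Fintype m] [Fintype n] [CommRing R]

theorem trace_transpose_mul_self (A : Matrix m n R) : (Aᵀ * A).trace = ∑ i, ∑ j, A i j ^ 2 := by
  simp only [trace, diag, mul_apply, transpose_apply, sq]
  exact Finset.sum_comm

theorem trace_transpose_mul_vecMulVec_mul (A : Matrix m n R) (v : m → R) :
    (Aᵀ * vecMulVec v v * A).trace = Aᵀ *ᵥ v ⬝ᵥ Aᵀ *ᵥ v := by
  rw [mul_vecMulVec, vecMulVec_mul, trace_vecMulVec, ← mulVec_transpose]

theorem trace_transpose_mul_smul_one_sub_vecMulVec_mul [DecidableEq m] (A : Matrix m n R)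
    (c s : R) (v : m → R) :
    (Aᵀ * (c • (1 - s • vecMulVec v v)) * A).trace
      = c * ((Aᵀ * A).trace - s * (Aᵀ *ᵥ v ⬝ᵥ Aᵀ *ᵥ v)) := by
  rw [← trace_transpose_mul_vecMulVec_mul]
  simp only [Matrix.mul_smul, Matrix.smul_mul, Matrix.mul_sub, Matrix.sub_mul, Matrix.mul_one,
    trace_smul, trace_sub, smul_eq_mul]

end Matrix

open scoped Matrix.Norms.L2Operator

lemma enorm3_eq_norm (v : Fin 3 → ℝ) :
    enorm3 v = ‖(WithLp.toLp 2 v : EuclideanSpace ℝ (Fin 3))‖ := by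
  simp [enorm3, EuclideanSpace.norm_eq]

lemma enorm3_sq (v : Fin 3 → ℝ) : enorm3 v ^ 2 = v ⬝ᵥ v := by
  rw [enorm3, Real.sq_sqrt (by positivity)]
  simp [dotProduct, sq]

lemma setOf_enorm3_mulVec_eq_image_sphere (F : Matrix (Fin 3) (Fin 3) ℝ) :
    {x | ∃ v : Fin 3 → ℝ, enorm3 v = 1 ∧ x = enorm3 (F *ᵥ v)}
      = (fun x => ‖toEuclideanCLM (𝕜 := ℝ) F x‖) '' Metric.sphere 0 1 := by
  ext x
  simp only [Set.mem_ofPred_eq, Set.mem_image, mem_sphere_zero_iff_norm, enorm3_eq_norm]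
  constructor
  · rintro ⟨v, hv, rfl⟩
    exact ⟨WithLp.toLp 2 v, hv, by simp⟩
  · rintro ⟨w, hw, rfl⟩
    exact ⟨w.ofLp, by simpa using hw, rfl⟩

lemma lamM_eq_l2_opNorm (F : Matrix (Fin 3) (Fin 3) ℝ) : lamM F = ‖F‖ := by
  rw [lamM, setOf_enorm3_mulVec_eq_image_sphere, ContinuousLinearMap.sSup_sphere_eq_norm,
    l2_opNorm_toEuclideanCLM]

lemma isGreatest_lamM (F : Matrix (Fin 3) (Fin 3) ℝ) :
    IsGreatest {x | ∃ v : Fin 3 → ℝ, enorm3 v = 1 ∧ x = enorm3 (F *ᵥ v)} (lamM F) := by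
  rw [lamM, setOf_enorm3_mulVec_eq_image_sphere]
  exact ((isCompact_sphere 0 1).image (by fun_prop)).isGreatest_sSup
    ((NormedSpace.sphere_nonempty.mpr zero_le_one).image _)

lemma lamM_transpose (F : Matrix (Fin 3) (Fin 3) ℝ) : lamM Fᵀ = lamM F := by
  rw [lamM_eq_l2_opNorm, lamM_eq_l2_opNorm, ← conjTranspose_eq_transpose_of_trivial,
    l2_opNorm_conjTranspose]

theorem trace_inf_over_director_general (r : ℝ) (hr : 1 ≤ r)
    (F : Matrix (Fin 3) (Fin 3) ℝ) :
    IsLeast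
      {x | ∃ n : Fin 3 → ℝ, enorm3 n = 1 ∧
        x = (Fᵀ * (r ^ ((1 : ℝ) / 3) •
              ((1 : Matrix (Fin 3) (Fin 3) ℝ) - ((r - 1) / r) • Matrix.vecMulVec n n)) * F).trace}
      (r ^ ((1 : ℝ) / 3) * ((∑ i, ∑ j, (F i j) ^ 2) - ((r - 1) / r) * (lamM F) ^ 2)) := by
  have hr0 : 0 < r := by linarith
  have hs : 0 ≤ (r - 1) / r := div_nonneg (by linarith) hr0.le
  obtain ⟨⟨n₀, hn₀, hmax⟩, hle⟩ := isGreatest_lamM Fᵀ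
  rw [lamM_transpose] at hmax hle
  simp_rw [trace_transpose_mul_smul_one_sub_vecMulVec_mul, trace_transpose_mul_self, ← enorm3_sq]
  refine ⟨⟨n₀, hn₀, by rw [hmax]⟩, ?_⟩
  rintro x ⟨n, hn, rfl⟩
  gcongr
  exacts [Real.sqrt_nonneg _, hle ⟨n, hn, rfl⟩]

/-- For `F ∈ ℝ^{3×3}` with `det F = 1` and `r ≥ 1`, the infimum over unit vectors
`n ∈ S²` of `Tr(Fᵀ ℓ_n⁻¹ F)`, where `ℓ_n⁻¹ = r^{1/3}(I − ((r−1)/r) n⊗n)`, equals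
`r^{1/3}(|F|² − ((r−1)/r) λ_M(F)²)`, and the infimum is attained (`IsLeast`). -/
theorem trace_inf_over_director (r : ℝ) (hr : 1 ≤ r)
    (F : Matrix (Fin 3) (Fin 3) ℝ) (hdet : F.det = 1) :
    IsLeast
      {x | ∃ n : Fin 3 → ℝ, enorm3 n = 1 ∧
        x = (Fᵀ * (r ^ ((1 : ℝ) / 3) •
              ((1 : Matrix (Fin 3) (Fin 3) ℝ) - ((r - 1) / r) • Matrix.vecMulVec n n)) * F).trace}
      (r ^ ((1 : ℝ) / 3) * ((∑ i, ∑ j, (F i j) ^ 2) - ((r - 1) / r) * (lamM F) ^ 2)) :=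
  trace_inf_over_director_general r hr F
end

section
/- The function ψ_3D(s,t) is monotonically nondecreasing in each of its arguments s and t on the admissible region {(s,t): s^{1/2} ≤ t ≤ s²}. -/
/-!
Write `r = u⁶`. On the admissible region, `ψ_3D = 0` for `t ≤ u` and `ψ_3D = μ/2 (u² B − 3)`
otherwise, where `B = 2t/u³ + 1/t²` when `s² ≤ u³t` (region M) and `B = s²/u⁶ + t²/s² + 1/t²`
otherwise (region S). By AM–GM the S-bracket dominates the M-bracket, with equality on the
interface `s² = u³t`, and `u² · (2t/u³ + 1/t²) ≥ 3`, so `ψ_3D ≥ 0`. Each bracket is monotone on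
the part of the region where it is used, and the interface is crossed continuously.
-/

open Set

/-- Region L (liquid-like) of DeSimone–Dolzmann, in `(s,t)` variables. -/
def Lset (r : ℝ) : Set (ℝ × ℝ) :=
  {p | p.2 ≤ p.1 ^ 2 ∧ p.2 ≤ r ^ ((1 : ℝ) / 6) ∧ Real.sqrt p.1 ≤ p.2}

/-- Region M (stressed microstructure). -/
def Mset (r : ℝ) : Set (ℝ × ℝ) :=
  {p | p.2 ≤ p.1 ^ 2 ∧ r ^ (-(1 : ℝ) / 2) * p.1 ^ 2 ≤ p.2 ∧ r ^ ((1 : ℝ) / 6) ≤ p.2}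

/-- Region S (normal solid). -/
def Sset (r : ℝ) : Set (ℝ × ℝ) :=
  {p | p.2 ≤ r ^ (-(1 : ℝ) / 2) * p.1 ^ 2 ∧ Real.sqrt p.1 ≤ p.2}

/-- The M-branch formula of `ψ_3D`. -/
noncomputable def fM (μ r : ℝ) (p : ℝ × ℝ) : ℝ :=
  μ / 2 * (r ^ ((1 : ℝ) / 3) * (2 * p.2 / r ^ ((1 : ℝ) / 2) + 1 / p.2 ^ 2) - 3)

/-- The S-branch formula of `ψ_3D` (which is also `φ_3D`). -/
noncomputable def fS (μ r : ℝ) (p : ℝ × ℝ) : ℝ :=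
  μ / 2 * (r ^ ((1 : ℝ) / 3) * (p.1 ^ 2 / r + p.2 ^ 2 / p.1 ^ 2 + 1 / p.2 ^ 2) - 3)

open Classical in
/-- The relaxed energy function `ψ_3D` of DeSimone–Dolzmann. -/
noncomputable def psi3D (μ r : ℝ) (p : ℝ × ℝ) : ℝ :=
  if p ∈ Lset r then 0 else if p ∈ Mset r then fM μ r p else fS μ r p

/-- The admissible region `{(s,t) : s ≥ 0, t ≥ 0, s^{1/2} ≤ t ≤ s²}`. -/
def Adm : Set (ℝ × ℝ) :=
  {p | 0 ≤ p.1 ∧ 0 ≤ p.2 ∧ Real.sqrt p.1 ≤ p.2 ∧ p.2 ≤ p.1 ^ 2}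

section Brackets

variable {u s t s₁ s₂ t₁ t₂ : ℝ}

noncomputable def bracketM (u t : ℝ) : ℝ := 2 * t / u ^ 3 + 1 / t ^ 2

noncomputable def bracketS (u s t : ℝ) : ℝ := s ^ 2 / u ^ 6 + t ^ 2 / s ^ 2 + 1 / t ^ 2

noncomputable def bracketMS (u s t : ℝ) : ℝ :=
  if s ^ 2 ≤ u ^ 3 * t then bracketM u t else bracketS u s t

theorem bracketM_le_bracketS (hu : 0 < u) (hs : 0 < s) (ht : 0 < t) :
    bracketM u t ≤ bracketS u s t := by
  have key : bracketS u s t - bracketM u t = (s ^ 2 - u ^ 3 * t) ^ 2 / (u ^ 6 * s ^ 2) := by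
    unfold bracketS bracketM; field_simp; ring
  rw [← sub_nonneg, key]
  positivity

theorem bracketS_eq_bracketM (hu : 0 < u) (hs : 0 < s) :
    bracketS u s (s ^ 2 / u ^ 3) = bracketM u (s ^ 2 / u ^ 3) := by
  unfold bracketS bracketM; field_simp; ring

theorem three_le_sq_mul_bracketM (hu : 0 < u) (ht : 0 < t) : 3 ≤ u ^ 2 * bracketM u t := by
  have key : u ^ 2 * bracketM u t - 3 = (t - u) ^ 2 * (2 * t + u) / (u * t ^ 2) := by
    unfold bracketM; field_simp; ring
  rw [← sub_nonneg, key]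
  positivity

theorem bracketM_mono (hu : 0 < u) (hut : u ≤ t₁) (ht : t₁ ≤ t₂) :
    bracketM u t₁ ≤ bracketM u t₂ := by
  have ht₁ : 0 < t₁ := hu.trans_le hut
  have ht₂ : 0 < t₂ := ht₁.trans_le ht
  have key : bracketM u t₂ - bracketM u t₁
      = (t₂ - t₁) * (2 * t₁ ^ 2 * t₂ ^ 2 - u ^ 3 * (t₁ + t₂)) / (u ^ 3 * t₁ ^ 2 * t₂ ^ 2) := by
    unfold bracketM; field_simp; ring
  have hu₁ : u ^ 3 ≤ t₁ ^ 3 := by gcongr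
  have hu₂ : u ^ 3 ≤ t₁ * t₂ ^ 2 := hu₁.trans (by nlinarith [mul_le_mul ht ht ht₁.le ht₂.le])
  have hnum : 0 ≤ 2 * t₁ ^ 2 * t₂ ^ 2 - u ^ 3 * (t₁ + t₂) := by
    nlinarith [mul_le_mul_of_nonneg_left hu₁ ht₂.le, mul_le_mul_of_nonneg_left hu₂ ht₁.le]
  rw [← sub_nonneg, key]
  exact div_nonneg (mul_nonneg (by linarith) hnum) (by positivity)

theorem bracketS_mono_left (hu : 0 < u) (ht : 0 ≤ t) (hs₁ : 0 < s₁) (hs : s₁ ≤ s₂)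
    (hb : u ^ 3 * t ≤ s₁ ^ 2) : bracketS u s₁ t ≤ bracketS u s₂ t := by
  have hs₂ : 0 < s₂ := hs₁.trans_le hs
  have key : bracketS u s₂ t - bracketS u s₁ t
      = (s₂ ^ 2 - s₁ ^ 2) * (s₁ ^ 2 * s₂ ^ 2 - (u ^ 3 * t) ^ 2) / (u ^ 6 * s₁ ^ 2 * s₂ ^ 2) := by
    unfold bracketS; field_simp; ring
  have hsq : s₁ ^ 2 ≤ s₂ ^ 2 := by gcongr
  have hnum : 0 ≤ s₁ ^ 2 * s₂ ^ 2 - (u ^ 3 * t) ^ 2 := by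
    nlinarith [mul_le_mul hb (hb.trans hsq) (by positivity) (by positivity)]
  rw [← sub_nonneg, key]
  exact div_nonneg (mul_nonneg (by linarith) hnum) (by positivity)

theorem bracketS_mono_right (hs : 0 < s) (ht₁ : 0 < t₁) (ht : t₁ ≤ t₂) (hb : s ≤ t₁ ^ 2) :
    bracketS u s t₁ ≤ bracketS u s t₂ := by
  have ht₂ : 0 < t₂ := ht₁.trans_le ht
  have key : bracketS u s t₂ - bracketS u s t₁
      = (t₂ ^ 2 - t₁ ^ 2) * (t₁ ^ 2 * t₂ ^ 2 - s ^ 2) / (s ^ 2 * t₁ ^ 2 * t₂ ^ 2) := by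
    unfold bracketS; field_simp; ring
  have hsq : t₁ ^ 2 ≤ t₂ ^ 2 := by gcongr
  have hnum : 0 ≤ t₁ ^ 2 * t₂ ^ 2 - s ^ 2 := by
    nlinarith [mul_le_mul hb (hb.trans hsq) hs.le (by positivity)]
  rw [← sub_nonneg, key]
  exact div_nonneg (mul_nonneg (by linarith) hnum) (by positivity)

theorem bracketM_le_bracketMS (hu : 0 < u) (hs : 0 < s) (ht : 0 < t) :
    bracketM u t ≤ bracketMS u s t := by
  unfold bracketMS
  split_ifs
  exacts [le_rfl, bracketM_le_bracketS hu hs ht]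

theorem bracketMS_mono_left (hu : 0 < u) (ht : 0 < t) (hs₁ : 0 < s₁) (hs : s₁ ≤ s₂) :
    bracketMS u s₁ t ≤ bracketMS u s₂ t := by
  by_cases hb : s₁ ^ 2 ≤ u ^ 3 * t
  · rw [bracketMS, if_pos hb]
    exact bracketM_le_bracketMS hu (hs₁.trans_le hs) ht
  · have hb₂ : ¬ s₂ ^ 2 ≤ u ^ 3 * t := fun h => hb ((pow_le_pow_left₀ hs₁.le hs 2).trans h)
    rw [bracketMS, bracketMS, if_neg hb, if_neg hb₂]
    exact bracketS_mono_left hu ht.le hs₁ hs (not_le.mp hb).le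

theorem bracketMS_mono_right (hu : 0 < u) (hs : 0 < s) (hut : u ≤ t₁) (ht : t₁ ≤ t₂)
    (hb : s ≤ t₁ ^ 2) : bracketMS u s t₁ ≤ bracketMS u s t₂ := by
  have ht₁ : 0 < t₁ := hu.trans_le hut
  by_cases hb₁ : s ^ 2 ≤ u ^ 3 * t₁
  · have hb₂ : s ^ 2 ≤ u ^ 3 * t₂ := hb₁.trans (by gcongr)
    rw [bracketMS, bracketMS, if_pos hb₁, if_pos hb₂]
    exact bracketM_mono hu hut ht
  by_cases hb₂ : s ^ 2 ≤ u ^ 3 * t₂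
  · set t₀ := s ^ 2 / u ^ 3
    have ht₁₀ : t₁ ≤ t₀ := by rw [le_div_iff₀ (by positivity)]; linarith
    have ht₀₂ : t₀ ≤ t₂ := by rw [div_le_iff₀ (by positivity)]; linarith
    rw [bracketMS, bracketMS, if_neg hb₁, if_pos hb₂]
    calc bracketS u s t₁ ≤ bracketS u s t₀ := bracketS_mono_right hs ht₁ ht₁₀ hb
      _ = bracketM u t₀ := bracketS_eq_bracketM hu hs
      _ ≤ bracketM u t₂ := bracketM_mono hu (hut.trans ht₁₀) ht₀₂
  · rw [bracketMS, bracketMS, if_neg hb₁, if_neg hb₂]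
    exact bracketS_mono_right hs ht₁ ht hb

end Brackets

section PowSix

variable {μ u : ℝ} {p : ℝ × ℝ}

theorem pow_six_rpow (hu : 0 ≤ u) (x : ℝ) : (u ^ 6) ^ x = u ^ (6 * x) := by
  rw [← Real.rpow_natCast, ← Real.rpow_mul hu]
  norm_num

theorem fM_pow_six (hu : 0 ≤ u) : fM μ (u ^ 6) p = μ / 2 * (u ^ 2 * bracketM u p.2 - 3) := by
  simp only [fM, bracketM, pow_six_rpow hu]
  norm_num

theorem fS_pow_six (hu : 0 ≤ u) :
    fS μ (u ^ 6) p = μ / 2 * (u ^ 2 * bracketS u p.1 p.2 - 3) := by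
  simp only [fS, bracketS, pow_six_rpow hu]
  norm_num

theorem fst_le_sq_snd_of_mem_Adm (hp : p ∈ Adm) : p.1 ≤ p.2 ^ 2 :=
  (Real.sqrt_le_iff.mp hp.2.2.1).2

theorem fst_pos_of_mem_Adm (hp : p ∈ Adm) (ht : 0 < p.2) : 0 < p.1 :=
  hp.1.lt_of_ne' (sq_pos_iff.mp (ht.trans_le hp.2.2.2))

theorem mem_Lset_pow_six_iff (hu : 0 ≤ u) (hp : p ∈ Adm) : p ∈ Lset (u ^ 6) ↔ p.2 ≤ u := by
  simp [Lset, pow_six_rpow hu, hp.2.2.1, hp.2.2.2]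

theorem mem_Mset_pow_six_iff (hu : 0 < u) (hp : p ∈ Adm) (ht : u ≤ p.2) :
    p ∈ Mset (u ^ 6) ↔ p.1 ^ 2 ≤ u ^ 3 * p.2 := by
  have h : (u ^ 6) ^ (-(1 : ℝ) / 2) = (u ^ 3)⁻¹ := by
    rw [pow_six_rpow hu.le]
    norm_num [Real.rpow_neg hu.le]
  simp only [Mset, h, pow_six_rpow hu.le]
  norm_num [hp.2.2.2, ht, inv_mul_le_iff₀ (pow_pos hu 3)]

theorem psi3D_pow_six_of_mem_Adm (hu : 0 < u) (hp : p ∈ Adm) :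
    psi3D μ (u ^ 6) p = if p.2 ≤ u then 0 else μ / 2 * (u ^ 2 * bracketMS u p.1 p.2 - 3) := by
  by_cases ht : p.2 ≤ u
  · simp [psi3D, (mem_Lset_pow_six_iff hu.le hp).mpr ht, ht]
  · have hL : p ∉ Lset (u ^ 6) := (mem_Lset_pow_six_iff hu.le hp).not.mpr ht
    rw [psi3D, if_neg hL, if_neg ht, mem_Mset_pow_six_iff hu hp (not_le.mp ht).le, bracketMS]
    split_ifs
    exacts [fM_pow_six hu.le, fS_pow_six hu.le]

theorem psi3D_pow_six_nonneg (hμ : 0 ≤ μ) (hu : 0 < u) (hp : p ∈ Adm) :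
    0 ≤ psi3D μ (u ^ 6) p := by
  rw [psi3D_pow_six_of_mem_Adm hu hp]
  split_ifs with hut
  · rfl
  have ht : 0 < p.2 := hu.trans (not_le.mp hut)
  have h3 : 3 ≤ u ^ 2 * bracketMS u p.1 p.2 := calc
    3 ≤ u ^ 2 * bracketM u p.2 := three_le_sq_mul_bracketM hu ht
    _ ≤ u ^ 2 * bracketMS u p.1 p.2 := by
      gcongr
      exact bracketM_le_bracketMS hu (fst_pos_of_mem_Adm hp ht) ht
  exact mul_nonneg (by positivity) (by linarith)

end PowSix

/-- `ψ_3D(s,t)` is monotonically nondecreasing in each argument on the admissible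
region `{s^{1/2} ≤ t ≤ s²}`. -/
theorem psi3D_monotone (μ r : ℝ) (hμ : 0 < μ) (hr : 1 ≤ r) :
    (∀ p ∈ Adm, ∀ q ∈ Adm, p.1 ≤ q.1 → p.2 = q.2 → psi3D μ r p ≤ psi3D μ r q) ∧
    (∀ p ∈ Adm, ∀ q ∈ Adm, p.1 = q.1 → p.2 ≤ q.2 → psi3D μ r p ≤ psi3D μ r q) := by
  obtain ⟨u, hu, rfl⟩ : ∃ u : ℝ, 0 < u ∧ r = u ^ 6 :=
    ⟨r ^ ((6 : ℕ)⁻¹ : ℝ), by positivity,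
      (Real.rpow_inv_natCast_pow (by linarith) (by norm_num)).symm⟩
  constructor
  · intro p hp q hq hs ht
    rw [psi3D_pow_six_of_mem_Adm hu hp, psi3D_pow_six_of_mem_Adm hu hq, ← ht]
    split_ifs with hut
    · rfl
    have ht₀ : 0 < p.2 := hu.trans (not_le.mp hut)
    gcongr
    exact bracketMS_mono_left hu ht₀ (fst_pos_of_mem_Adm hp ht₀) hs
  · intro p hp q hq hs ht
    rw [psi3D_pow_six_of_mem_Adm hu hp]
    split_ifs with hut
    · exact psi3D_pow_six_nonneg hμ.le hu hq
    have ht₀ : 0 < p.2 := hu.trans (not_le.mp hut)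
    rw [psi3D_pow_six_of_mem_Adm hu hq, if_neg fun h => hut (ht.trans h), ← hs]
    gcongr
    exact bracketMS_mono_right hu (fst_pos_of_mem_Adm hp ht₀) (not_le.mp hut).le ht
      (fst_le_sq_snd_of_mem_Adm hp)
end

section
/- ψ_3D ≤ φ_3D on the admissible region, where φ_3D(s,t) = (μ/2)(r^{1/3}(s²/r + t²/s² + 1/t²) − 3), with equality precisely on the region S. -/
open Set

/-!
Put `R = r^{1/6}`, so that `r^{1/3} = R²` and `r^{1/2} = R³`. With `a = t / R` the M-branch is
`(μ/2)(2a + 1/a² - 3) = (μ/2)(a - 1)²(2a + 1)/a²`, which is nonnegative and vanishes only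
on `t = R`, and `φ_3D` exceeds it by the square `(μ/2) r^{1/3} (s/r^{1/2} - t/s)²`, which
vanishes only on the curve `t = r^{-1/2} s²`. Hence `0 ≤ fM ≤ φ_3D`, strictly in the interiors
of `L` and `M`, while `S` meets `M` only on that curve and meets `L` only in the point `(R², R)`.
-/

lemma two_mul_add_one_div_sq_sub_three {a : ℝ} (ha : a ≠ 0) :
    2 * a + 1 / a ^ 2 - 3 = (a - 1) ^ 2 * (2 * a + 1) / a ^ 2 := by
  field_simp
  ring

lemma three_le_two_mul_add_one_div_sq {a : ℝ} (ha : 0 < a) : 3 ≤ 2 * a + 1 / a ^ 2 := by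
  rw [← sub_nonneg, two_mul_add_one_div_sq_sub_three ha.ne']
  positivity

lemma three_lt_two_mul_add_one_div_sq {a : ℝ} (ha : 0 < a) (ha1 : a ≠ 1) :
    3 < 2 * a + 1 / a ^ 2 := by
  have : (a - 1) ^ 2 ≠ 0 := pow_ne_zero 2 (sub_ne_zero.mpr ha1)
  rw [← sub_pos, two_mul_add_one_div_sq_sub_three ha.ne']
  positivity

lemma rpow_one_div_six_pow {r : ℝ} (hr : 0 ≤ r) (n : ℕ) :
    (r ^ ((1 : ℝ) / 6)) ^ n = r ^ ((n : ℝ) / 6) := by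
  rw [← Real.rpow_mul_natCast hr]
  ring_nf

lemma rpow_neg_half_eq {r : ℝ} (hr : 0 ≤ r) :
    r ^ (-(1 : ℝ) / 2) = ((r ^ ((1 : ℝ) / 6)) ^ 3)⁻¹ := by
  rw [rpow_one_div_six_pow hr, neg_div, Real.rpow_neg hr]
  norm_num

section

variable {μ r : ℝ} {p : ℝ × ℝ}

lemma fM_eq (hr : 0 < r) :
    fM μ r p =
      μ / 2 * (2 * (p.2 / r ^ ((1 : ℝ) / 6)) + 1 / (p.2 / r ^ ((1 : ℝ) / 6)) ^ 2 - 3) := by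
  have hR : 0 < r ^ ((1 : ℝ) / 6) := by positivity
  have h2 := rpow_one_div_six_pow hr.le 2
  have h3 := rpow_one_div_six_pow hr.le 3
  norm_num at h2 h3
  rw [fM, ← h2, ← h3]
  generalize r ^ ((1 : ℝ) / 6) = R at hR
  field_simp

lemma fM_nonneg (hμ : 0 ≤ μ) (hr : 0 < r) (ht : 0 < p.2) : 0 ≤ fM μ r p := by
  rw [fM_eq hr]
  exact mul_nonneg (by positivity) <| sub_nonneg.mpr <|
    three_le_two_mul_add_one_div_sq (div_pos ht (Real.rpow_pos_of_pos hr _))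

lemma fM_pos (hμ : 0 < μ) (hr : 0 < r) (ht : 0 < p.2) (htR : p.2 ≠ r ^ ((1 : ℝ) / 6)) :
    0 < fM μ r p := by
  have hR : 0 < r ^ ((1 : ℝ) / 6) := Real.rpow_pos_of_pos hr _
  rw [fM_eq hr]
  exact mul_pos (by positivity) <| sub_pos.mpr <|
    three_lt_two_mul_add_one_div_sq (div_pos ht hR) ((div_eq_one_iff_eq hR.ne').not.mpr htR)

lemma fM_eq_zero (hr : 0 < r) (htR : p.2 = r ^ ((1 : ℝ) / 6)) : fM μ r p = 0 := by
  rw [fM_eq hr, htR, div_self (Real.rpow_pos_of_pos hr _).ne']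
  norm_num

lemma fS_sub_fM (hr : 0 < r) (hs : p.1 ≠ 0) :
    fS μ r p - fM μ r p
      = μ / 2 * r ^ ((1 : ℝ) / 3) * (p.1 / r ^ ((1 : ℝ) / 2) - p.2 / p.1) ^ 2 := by
  have hq : 0 < r ^ ((1 : ℝ) / 2) := Real.rpow_pos_of_pos hr _
  have hq2 : (r ^ ((1 : ℝ) / 2)) ^ 2 = r := by
    rw [← Real.rpow_mul_natCast hr.le]
    norm_num
  rw [fS, fM]
  generalize r ^ ((1 : ℝ) / 3) = c
  generalize r ^ ((1 : ℝ) / 2) = q at hq hq2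
  subst hq2
  ring_nf
  field_simp
  ring

lemma fM_le_fS (hμ : 0 ≤ μ) (hr : 0 < r) (hs : p.1 ≠ 0) : fM μ r p ≤ fS μ r p := by
  rw [← sub_nonneg, fS_sub_fM hr hs]
  positivity

lemma div_rpow_half_sub_div_eq_zero_iff (hr : 0 < r) (hs : p.1 ≠ 0) :
    p.1 / r ^ ((1 : ℝ) / 2) - p.2 / p.1 = 0 ↔ p.2 = r ^ (-(1 : ℝ) / 2) * p.1 ^ 2 := by
  have hq : r ^ ((1 : ℝ) / 2) ≠ 0 := (Real.rpow_pos_of_pos hr _).ne'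
  rw [neg_div, Real.rpow_neg hr.le, sub_eq_zero, eq_comm, div_eq_div_iff hs hq, inv_mul_eq_div,
    eq_div_iff hq, sq]

lemma fM_eq_fS (hr : 0 < r) (hs : p.1 ≠ 0) (h : p.2 = r ^ (-(1 : ℝ) / 2) * p.1 ^ 2) :
    fM μ r p = fS μ r p := by
  rw [eq_comm, ← sub_eq_zero, fS_sub_fM hr hs,
    (div_rpow_half_sub_div_eq_zero_iff hr hs).mpr h]
  ring

lemma fM_lt_fS (hμ : 0 < μ) (hr : 0 < r) (hs : p.1 ≠ 0)
    (h : p.2 ≠ r ^ (-(1 : ℝ) / 2) * p.1 ^ 2) : fM μ r p < fS μ r p := by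
  have : p.1 / r ^ ((1 : ℝ) / 2) - p.2 / p.1 ≠ 0 :=
    (div_rpow_half_sub_div_eq_zero_iff hr hs).not.mpr h
  rw [← sub_pos, fS_sub_fM hr hs]
  positivity

lemma eq_of_mem_Lset_of_mem_Sset (hr : 0 < r) (hs : 0 < p.1) (hL : p ∈ Lset r)
    (hS : p ∈ Sset r) : p.2 = r ^ ((1 : ℝ) / 6) ∧ p.2 = r ^ (-(1 : ℝ) / 2) * p.1 ^ 2 := by
  obtain ⟨-, htR, hst⟩ := hL
  obtain ⟨hts, -⟩ := hS
  rw [rpow_neg_half_eq hr.le] at hts ⊢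
  generalize r ^ ((1 : ℝ) / 6) = R at htR hts ⊢
  have ht : 0 < p.2 := (Real.sqrt_pos.mpr hs).trans_le hst
  have hR : 0 < R := ht.trans_le htR
  rw [le_inv_mul_iff₀ (by positivity)] at hts
  have hs4 : p.1 ^ 2 ≤ p.2 ^ 4 := by
    simpa [← pow_mul] using pow_le_pow_left₀ hs.le ((Real.sqrt_le_left ht.le).mp hst) 2
  have hRt : R ≤ p.2 := by
    refine (pow_le_pow_iff_left₀ hR.le ht.le three_ne_zero).mp (le_of_mul_le_mul_right ?_ ht)
    linarith [show p.2 ^ 4 = p.2 ^ 3 * p.2 by ring]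
  obtain rfl : p.2 = R := le_antisymm htR hRt
  refine ⟨rfl, (eq_inv_mul_iff_mul_eq₀ (by positivity)).mpr (le_antisymm hts ?_)⟩
  linarith [show p.2 ^ 4 = p.2 ^ 3 * p.2 by ring]

lemma psi3D_le_fS (hμ : 0 ≤ μ) (hr : 0 < r) (hs : 0 < p.1) (hst : √p.1 ≤ p.2) :
    psi3D μ r p ≤ fS μ r p := by
  have ht : 0 < p.2 := (Real.sqrt_pos.mpr hs).trans_le hst
  unfold psi3D
  split_ifs
  · exact (fM_nonneg hμ hr ht).trans (fM_le_fS hμ hr hs.ne')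
  · exact fM_le_fS hμ hr hs.ne'
  · exact le_rfl

lemma psi3D_eq_fS_of_mem_Sset (hr : 0 < r) (hs : 0 < p.1) (hS : p ∈ Sset r) :
    psi3D μ r p = fS μ r p := by
  unfold psi3D
  split_ifs with hL hM
  · obtain ⟨htR, hcurve⟩ := eq_of_mem_Lset_of_mem_Sset hr hs hL hS
    rw [← fM_eq_fS hr hs.ne' hcurve, fM_eq_zero hr htR]
  · exact fM_eq_fS hr hs.ne' (le_antisymm hS.1 hM.2.1)
  · rfl

lemma psi3D_lt_fS_of_interior_Lset (hμ : 0 < μ) (hr : 0 < r) (h₁ : p.2 < p.1 ^ 2)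
    (h₂ : p.2 < r ^ ((1 : ℝ) / 6)) (h₃ : √p.1 < p.2) : psi3D μ r p < fS μ r p := by
  have ht : 0 < p.2 := (Real.sqrt_nonneg _).trans_lt h₃
  have hs : p.1 ≠ 0 := (pow_ne_zero_iff two_ne_zero).mp (ht.trans h₁).ne'
  rw [psi3D, if_pos ⟨h₁.le, h₂.le, h₃.le⟩]
  exact (fM_pos hμ hr ht h₂.ne).trans_le (fM_le_fS hμ.le hr hs)

lemma psi3D_lt_fS_of_interior_Mset (hμ : 0 < μ) (hr : 0 < r) (h₁ : p.2 < p.1 ^ 2)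
    (h₂ : r ^ (-(1 : ℝ) / 2) * p.1 ^ 2 < p.2) (h₃ : r ^ ((1 : ℝ) / 6) < p.2) :
    psi3D μ r p < fS μ r p := by
  have ht : 0 < p.2 := (Real.rpow_pos_of_pos hr _).trans h₃
  have hs : p.1 ≠ 0 := (pow_ne_zero_iff two_ne_zero).mp (ht.trans h₁).ne'
  rw [psi3D, if_neg fun hL => (hL.2.1.trans_lt h₃).false, if_pos ⟨h₁.le, h₂.le, h₃.le⟩]
  exact fM_lt_fS hμ hr hs h₂.ne'

end

/-- `ψ_3D ≤ φ_3D` on the admissible region (where `φ_3D = fS`), with equality on S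
and, for `r > 1`, strict inequality in the interiors of L and M. -/
theorem psi3D_le_phi3D (μ r : ℝ) (hμ : 0 < μ) (hr : 1 ≤ r) :
    (∀ p ∈ Adm, 0 < p.1 → psi3D μ r p ≤ fS μ r p) ∧
    (∀ p ∈ Sset r, 0 < p.1 → psi3D μ r p = fS μ r p) ∧
    (1 < r → ∀ p : ℝ × ℝ,
      (p.2 < p.1 ^ 2 ∧ p.2 < r ^ ((1 : ℝ) / 6) ∧ Real.sqrt p.1 < p.2) →
      psi3D μ r p < fS μ r p) ∧
    (1 < r → ∀ p : ℝ × ℝ,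
      (p.2 < p.1 ^ 2 ∧ r ^ (-(1 : ℝ) / 2) * p.1 ^ 2 < p.2 ∧ r ^ ((1 : ℝ) / 6) < p.2) →
      psi3D μ r p < fS μ r p) := by
  have hr₀ : 0 < r := by linarith
  exact ⟨fun p hp hs => psi3D_le_fS hμ.le hr₀ hs hp.2.2.1,
    fun p hS hs => psi3D_eq_fS_of_mem_Sset hr₀ hs hS,
    fun _ p ⟨h₁, h₂, h₃⟩ => psi3D_lt_fS_of_interior_Lset hμ hr₀ h₁ h₂ h₃,
    fun _ p ⟨h₁, h₂, h₃⟩ => psi3D_lt_fS_of_interior_Mset hμ hr₀ h₁ h₂ h₃⟩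
end
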